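/- Let K be a field of characteristic zero and let \lambda_0, \lambda_1, \lambda_2 ∈ K be pairwise distinct and nonzero with s_1 = \lambda_0+\lambda_1+\lambda_2 ≠ 0, s_2 = \lambda_0\lambda_1+\lambda_1\lambda_2+\lambda_2\lambda_0, s_3 = \lambda_0\lambda_1\lambda_2, satisfying s_2^2 = 3 s_1 s_3. Fix i ∈ {0,1,2} and define the rational functions in x: A_{00} = s_1·( s_1 s_2^3 + (-4 s_1^2 s_2^2 + 3 s_2^3) x + (-s_1^3 s_2 + 12 s_1 s_2^2) x^2 + (11 s_1^4 - 36 s_1^2 s_2) x^3 ) / ( 9 (s_1 x - s_2)^5 ); A_{01} = -s_1·( s_2^3 - 4 s_1 s_2^2 x + (3 s_1^2 s_2 + 9 s_2^2) x^2 + (3 s_1^3 - 21 s_1 s_2) x^3 + 3 s_1^2 x^4 ) / ( 3 (s_1 x - s_2)^4 ); A_{02} = -( s_2^3 - 5 s_1 s_2^2 x + 9 s_1^2 s_2 x^2 + (-6 s_1^3 - 3 s_1 s_2) x^3 + 6 s_1^2 x^4 ) / ( 3 (s_1 x - s_2)^3 ); A_{10} = s_1^2 x · P(x) / ( 27 (s_1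 x - s_2)^9 ) and A_{11} = -s_1 x · P(x) / ( 27 (s_1 x - s_2)^8 ), where P(x) = (8 s_1^2 s_2^5 - 21 s_2^6) + (-48 s_1^3 s_2^4 + 126 s_1 s_2^5) x + (120 s_1^4 s_2^3 - 315 s_1^2 s_2^4) x^2 + (-124 s_1^5 s_2^2 + 264 s_1^3 s_2^3 + 144 s_1 s_2^4) x^3 + (12 s_1^6 s_2 + 153 s_1^4 s_2^2 - 432 s_1^2 s_2^3) x^4 + (60 s_1^7 - 342 s_1^5 s_2 + 432 s_1^3 s_2^2) x^5 + (-33 s_1^6 + 108 s_1^4 s_2) x^6; A_{12} = s_1·( -s_2^6 + 9 s_1 s_2^5 x + (-32 s_1^2 s_2^4 - 9 s_2^5) x^2 + (57 s_1^3 s_2^3 + 60 s_1 s_2^4) x^3 + (-48 s_1^4 s_2^2 - 171 s_1^2 s_2^3) x^4 + (9 s_1^5 s_2 + 237 s_1^3 s_2^2 + 27 s_1 s_2^3) x^5 + (9 s_1^6 - 144 s_1^4 s_2 - 90 s_1^2 s_2^2) x^6 + (9 s_1^5 + 108 s_1^3 s_2) x^7 - 18 s_1^4 x^8 ) / ( 9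 (s_1 x - s_2)^7 ); A_{13} = -( (3 x^2 s_1^2 - 3 x s_1 s_2 + s_2^2)·(-3 x^3 s_1 + 3 x^2 s_1^2 - 3 x s_1 s_2 + s_2^2)^2 ) / ( 27 (s_1 x - s_2)^6 ). Since s_1\lambda_i - s_2 ≠ 0, the ring K[x][(s_1 x - s_2)^{-1}] embeds into K[[x - \lambda_i]]. Then for any sequence (\Phi_p)_{p≥0} in K[[x - \lambda_i]] with \Phi_0 = 1 and \Phi_j = 0 for j < 0, satisfying for all p ≥ 1: d\Phi_p/dx = A_{00}\Phi_{p-1} + A_{01}\Phi_{p-1}' + A_{02}\Phi_{p-1}'' + A_{10}\Phi_{p-2} + A_{11}\Phi_{p-2}' + A_{12}\Phi_{p-2}'' + A_{13}\Phi_{p-2}''' (primes denoting d/dx), every \Phi_p lies in the subring K[x][(s_1 x - s_2)^{-1}] of K[[x - \lambda_i]]. -/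

import Mathlib

open PowerSeries

noncomputable section

/-- The element `x = λᵢ + X` of `K[[X]] = K[[x - λᵢ]]`. -/
def xAt (K : Type*) [Field K] (c : K) : K⟦X⟧ := PowerSeries.X + PowerSeries.C (R := K) c

/-- `s₁x - s₂`, viewed in `K[[x - λᵢ]]`. -/
def fP2 (K : Type*) [Field K] (c s1 s2 : K) : K⟦X⟧ :=
  PowerSeries.C (R := K) s1 * xAt K c - PowerSeries.C (R := K) s2

/-- `A₀₀ = s₁(s₁s₂³ + (-4s₁²s₂² + 3s₂³)x + (-s₁³s₂ + 12s₁s₂²)x² + (11s₁⁴ - 36s₁²s₂)x³)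
  / (9(s₁x - s₂)⁵)`. -/
def A00P2 (K : Type*) [Field K] (c s1 s2 : K) : K⟦X⟧ :=
  PowerSeries.C (R := K) s1 *
  (PowerSeries.C (R := K) (s1 * s2 ^ 3) +
    PowerSeries.C (R := K) (-4 * s1 ^ 2 * s2 ^ 2 + 3 * s2 ^ 3) * xAt K c +
    PowerSeries.C (R := K) (-(s1 ^ 3 * s2) + 12 * s1 * s2 ^ 2) * xAt K c ^ 2 +
    PowerSeries.C (R := K) (11 * s1 ^ 4 - 36 * s1 ^ 2 * s2) * xAt K c ^ 3) *
  (PowerSeries.C (R := K) 9 * fP2 K c s1 s2 ^ 5)⁻¹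

/-- `A₀₁ = -s₁(s₂³ - 4s₁s₂²x + (3s₁²s₂ + 9s₂²)x² + (3s₁³ - 21s₁s₂)x³ + 3s₁²x⁴)
  / (3(s₁x - s₂)⁴)`. -/
def A01P2 (K : Type*) [Field K] (c s1 s2 : K) : K⟦X⟧ :=
  PowerSeries.C (R := K) (-s1) *
  (PowerSeries.C (R := K) (s2 ^ 3) +
    PowerSeries.C (R := K) (-4 * (s1 * s2 ^ 2)) * xAt K c +
    PowerSeries.C (R := K) (3 * s1 ^ 2 * s2 + 9 * s2 ^ 2) * xAt K c ^ 2 +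
    PowerSeries.C (R := K) (3 * s1 ^ 3 - 21 * s1 * s2) * xAt K c ^ 3 +
    PowerSeries.C (R := K) (3 * s1 ^ 2) * xAt K c ^ 4) *
  (PowerSeries.C (R := K) 3 * fP2 K c s1 s2 ^ 4)⁻¹

/-- `A₀₂ = -(s₂³ - 5s₁s₂²x + 9s₁²s₂x² + (-6s₁³ - 3s₁s₂)x³ + 6s₁²x⁴) / (3(s₁x - s₂)³)`. -/
def A02P2 (K : Type*) [Field K] (c s1 s2 : K) : K⟦X⟧ :=
  -(PowerSeries.C (R := K) (s2 ^ 3) +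
    PowerSeries.C (R := K) (-5 * (s1 * s2 ^ 2)) * xAt K c +
    PowerSeries.C (R := K) (9 * s1 ^ 2 * s2) * xAt K c ^ 2 +
    PowerSeries.C (R := K) (-6 * s1 ^ 3 - 3 * s1 * s2) * xAt K c ^ 3 +
    PowerSeries.C (R := K) (6 * s1 ^ 2) * xAt K c ^ 4) *
  (PowerSeries.C (R := K) 3 * fP2 K c s1 s2 ^ 3)⁻¹

/-- The degree-six polynomial `P(x)` appearing in `A₁₀` and `A₁₁`. -/
def PP2 (K : Type*) [Field K] (c s1 s2 : K) : K⟦X⟧ :=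
  PowerSeries.C (R := K) (8 * s1 ^ 2 * s2 ^ 5 - 21 * s2 ^ 6) +
  PowerSeries.C (R := K) (-48 * s1 ^ 3 * s2 ^ 4 + 126 * s1 * s2 ^ 5) * xAt K c +
  PowerSeries.C (R := K) (120 * s1 ^ 4 * s2 ^ 3 - 315 * s1 ^ 2 * s2 ^ 4) * xAt K c ^ 2 +
  PowerSeries.C (R := K) (-124 * s1 ^ 5 * s2 ^ 2 + 264 * s1 ^ 3 * s2 ^ 3 + 144 * s1 * s2 ^ 4) *
    xAt K c ^ 3 +
  PowerSeries.C (R := K) (12 * s1 ^ 6 * s2 + 153 * s1 ^ 4 * s2 ^ 2 - 432 * s1 ^ 2 * s2 ^ 3) *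
    xAt K c ^ 4 +
  PowerSeries.C (R := K) (60 * s1 ^ 7 - 342 * s1 ^ 5 * s2 + 432 * s1 ^ 3 * s2 ^ 2) * xAt K c ^ 5 +
  PowerSeries.C (R := K) (-33 * s1 ^ 6 + 108 * s1 ^ 4 * s2) * xAt K c ^ 6

/-- `A₁₀ = s₁²·x·P(x) / (27(s₁x - s₂)⁹)`. -/
def A10P2 (K : Type*) [Field K] (c s1 s2 : K) : K⟦X⟧ :=
  PowerSeries.C (R := K) (s1 ^ 2) * xAt K c * PP2 K c s1 s2 *
    (PowerSeries.C (R := K) 27 * fP2 K c s1 s2 ^ 9)⁻¹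

/-- `A₁₁ = -s₁·x·P(x) / (27(s₁x - s₂)⁸)`. -/
def A11P2 (K : Type*) [Field K] (c s1 s2 : K) : K⟦X⟧ :=
  PowerSeries.C (R := K) (-s1) * xAt K c * PP2 K c s1 s2 *
    (PowerSeries.C (R := K) 27 * fP2 K c s1 s2 ^ 8)⁻¹

/-- `A₁₂ = s₁·(-s₂⁶ + 9s₁s₂⁵x + (-32s₁²s₂⁴ - 9s₂⁵)x² + (57s₁³s₂³ + 60s₁s₂⁴)x³
  + (-48s₁⁴s₂² - 171s₁²s₂³)x⁴ + (9s₁⁵s₂ + 237s₁³s₂² + 27s₁s₂³)x⁵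
  + (9s₁⁶ - 144s₁⁴s₂ - 90s₁²s₂²)x⁶ + (9s₁⁵ + 108s₁³s₂)x⁷ - 18s₁⁴x⁸) / (9(s₁x - s₂)⁷)`. -/
def A12P2 (K : Type*) [Field K] (c s1 s2 : K) : K⟦X⟧ :=
  PowerSeries.C (R := K) s1 *
  (PowerSeries.C (R := K) (-(s2 ^ 6)) +
    PowerSeries.C (R := K) (9 * s1 * s2 ^ 5) * xAt K c +
    PowerSeries.C (R := K) (-32 * s1 ^ 2 * s2 ^ 4 - 9 * s2 ^ 5) * xAt K c ^ 2 +
    PowerSeries.C (R := K) (57 * s1 ^ 3 * s2 ^ 3 + 60 * s1 * s2 ^ 4) * xAt K c ^ 3 +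
    PowerSeries.C (R := K) (-48 * s1 ^ 4 * s2 ^ 2 - 171 * s1 ^ 2 * s2 ^ 3) * xAt K c ^ 4 +
    PowerSeries.C (R := K) (9 * s1 ^ 5 * s2 + 237 * s1 ^ 3 * s2 ^ 2 + 27 * s1 * s2 ^ 3) *
      xAt K c ^ 5 +
    PowerSeries.C (R := K) (9 * s1 ^ 6 - 144 * s1 ^ 4 * s2 - 90 * s1 ^ 2 * s2 ^ 2) * xAt K c ^ 6 +
    PowerSeries.C (R := K) (9 * s1 ^ 5 + 108 * s1 ^ 3 * s2) * xAt K c ^ 7 -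
    PowerSeries.C (R := K) (18 * s1 ^ 4) * xAt K c ^ 8) *
  (PowerSeries.C (R := K) 9 * fP2 K c s1 s2 ^ 7)⁻¹

/-- `A₁₃ = -((3x²s₁² - 3xs₁s₂ + s₂²)·(-3x³s₁ + 3x²s₁² - 3xs₁s₂ + s₂²)²)
  / (27(s₁x - s₂)⁶)`. -/
def A13P2 (K : Type*) [Field K] (c s1 s2 : K) : K⟦X⟧ :=
  -((PowerSeries.C (R := K) (3 * s1 ^ 2) * xAt K c ^ 2 -
      PowerSeries.C (R := K) (3 * (s1 * s2)) * xAt K c + PowerSeries.C (R := K) (s2 ^ 2)) *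
    (PowerSeries.C (R := K) (-3 * s1) * xAt K c ^ 3 + PowerSeries.C (R := K) (3 * s1 ^ 2) * xAt K c ^ 2 -
      PowerSeries.C (R := K) (3 * (s1 * s2)) * xAt K c + PowerSeries.C (R := K) (s2 ^ 2)) ^ 2) *
  (PowerSeries.C (R := K) 27 * fP2 K c s1 s2 ^ 6)⁻¹

/-!
Put `f = s₁x - s₂`. Under `s₂² = 3s₁s₃` one has `(s₁λᵢ - s₂)² = s₁λᵢ∏_{j≠i}(λᵢ - λⱼ) ≠ 0`, so `f`
is a unit of `K⟦x - λᵢ⟧` and `K[x][f⁻¹] = K[f, f⁻¹]`, filtered by degree in `f`, with `x` of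
degree one. As `f' = s₁` is a nonzero constant, `d/dx` lowers the degree by one and kills the
constants, hence sends degree `≤ 0` to degree `≤ -2`; in characteristic zero it maps degree
`≤ -1` onto degree `≤ -2`. Reading off the coefficients, `A₀₀` and `A₁₀` have degree `≤ -2` and
`A₀ⱼ`, `A₁ⱼ` have degree `≤ j - 1` for `j ≥ 1`, so if `Φ_{p-1}` and `Φ_{p-2}` have degree `≤ 0` the
right-hand side of the recursion has degree `≤ -2`, and its antiderivative `Φ_p` has degree `≤ 0`
up to a constant. Induction on `p` concludes.
-/

section LaurentDegree

variable (K : Type*) {R : Type*} [Field K] [CommRing R] [Algebra K R] (f : Rˣ)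

def laurentDegLE (d : ℤ) : Submodule K R :=
  Submodule.span K ((fun k : ℤ => ((f ^ k : Rˣ) : R)) '' Set.Iic d)

variable {K f} {d e : ℤ} {y z : R}

theorem zpow_mem_laurentDegLE {k : ℤ} (h : k ≤ d) : ((f ^ k : Rˣ) : R) ∈ laurentDegLE K f d :=
  Submodule.subset_span ⟨k, h, rfl⟩

theorem laurentDegLE_mono : Monotone (laurentDegLE K f) := fun _ _ h =>
  Submodule.span_mono (Set.image_mono (Set.Iic_subset_Iic.2 h))

theorem algebraMap_mem_laurentDegLE (c : K) (h : 0 ≤ d) :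
    algebraMap K R c ∈ laurentDegLE K f d := by
  rw [Algebra.algebraMap_eq_smul_one]
  exact Submodule.smul_mem _ c (by simpa using zpow_mem_laurentDegLE (f := f) h)

theorem mul_mem_laurentDegLE (hy : y ∈ laurentDegLE K f d) (hz : z ∈ laurentDegLE K f e) :
    y * z ∈ laurentDegLE K f (d + e) := by
  refine Submodule.mul_le.1 ?_ y hy z hz
  rw [laurentDegLE, laurentDegLE, Submodule.span_mul_span]
  refine Submodule.span_le.2 ?_
  rintro _ ⟨_, ⟨k, hk, rfl⟩, _, ⟨l, hl, rfl⟩, rfl⟩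
  simpa [zpow_add] using zpow_mem_laurentDegLE (f := f) (add_le_add hk hl)

theorem pow_mem_laurentDegLE (hy : y ∈ laurentDegLE K f d) (n : ℕ) :
    y ^ n ∈ laurentDegLE K f (n * d) := by
  induction n with
  | zero => simpa using algebraMap_mem_laurentDegLE (f := f) (1 : K) le_rfl
  | succ n ih => simpa [pow_succ, add_mul] using mul_mem_laurentDegLE ih hy

theorem laurentDegLE_zero_le_adjoin_inv :
    laurentDegLE K f 0 ≤ Subalgebra.toSubmodule (Algebra.adjoin K {((f⁻¹ : Rˣ) : R)}) := by
  refine Submodule.span_le.2 ?_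
  rintro _ ⟨k, hk, rfl⟩
  obtain ⟨n, rfl⟩ := Int.exists_eq_neg_ofNat (Set.mem_Iic.1 hk)
  simp only [SetLike.mem_coe, Subalgebra.mem_toSubmodule]
  rw [zpow_neg, ← inv_zpow, zpow_natCast, Units.val_pow_eq_pow_val]
  exact pow_mem (Algebra.subset_adjoin (Set.mem_singleton _)) n

section Derivation

variable {D : Derivation K R R} {b : K}

theorem derivation_units_zpow (hDf : D f = algebraMap K R b) (k : ℤ) :
    D ((f ^ k : Rˣ) : R) = (k * b) • ((f ^ (k - 1) : Rˣ) : R) := by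
  have hadd : ∀ k j : ℤ, D ((f ^ k : Rˣ) : R) = (k * b) • ((f ^ (k - 1) : Rˣ) : R) →
      D ((f ^ j : Rˣ) : R) = (j * b) • ((f ^ (j - 1) : Rˣ) : R) →
      D ((f ^ (k + j) : Rˣ) : R) = ((k + j : ℤ) * b) • ((f ^ (k + j - 1) : Rˣ) : R) := by
    intro k j hk hj
    rw [zpow_add, Units.val_mul, D.leibniz, hk, hj, smul_comm, smul_eq_mul, ← Units.val_mul,
      ← zpow_add, smul_comm, smul_eq_mul, ← Units.val_mul, ← zpow_add,
      show j + (k - 1) = k + (j - 1) by ring, ← add_smul, show k + (j - 1) = k + j - 1 by ring]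
    congr 1
    push_cast
    ring
  have hone : D ((f ^ (1 : ℤ) : Rˣ) : R) = ((1 : ℤ) * b) • ((f ^ ((1 : ℤ) - 1) : Rˣ) : R) := by
    simp [hDf, Algebra.algebraMap_eq_smul_one]
  have hneg : D ((f ^ (-1 : ℤ) : Rˣ) : R) = ((-1 : ℤ) * b) • ((f ^ ((-1 : ℤ) - 1) : Rˣ) : R) := by
    rw [zpow_neg_one, D.leibniz_of_mul_eq_one (Units.inv_mul f), hDf,
      Algebra.algebraMap_eq_smul_one]
    simp [zpow_neg]
  induction k using Int.induction_on with
  | zero => simp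
  | succ k ih => exact hadd _ _ ih hone
  | pred k ih => exact hadd _ _ ih hneg

theorem derivation_mem_laurentDegLE (hDf : D f = algebraMap K R b) (hy : y ∈ laurentDegLE K f d) :
    D y ∈ laurentDegLE K f (d - 1) := by
  suffices h : laurentDegLE K f d ≤ (laurentDegLE K f (d - 1)).comap D.toLinearMap from h hy
  refine Submodule.span_le.2 ?_
  rintro _ ⟨k, hk, rfl⟩
  rw [SetLike.mem_coe, Submodule.mem_comap, Derivation.coeFn_coe, derivation_units_zpow hDf]
  exact Submodule.smul_mem _ _ (zpow_mem_laurentDegLE (by simpa using hk))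

theorem derivation_mem_laurentDegLE_neg_two (hDf : D f = algebraMap K R b)
    (hy : y ∈ laurentDegLE K f 0) : D y ∈ laurentDegLE K f (-2) := by
  suffices h : laurentDegLE K f 0 ≤ (laurentDegLE K f (-2)).comap D.toLinearMap from h hy
  refine Submodule.span_le.2 ?_
  rintro _ ⟨k, hk, rfl⟩
  rw [SetLike.mem_coe, Submodule.mem_comap, Derivation.coeFn_coe, derivation_units_zpow hDf]
  obtain rfl | hk := (Set.mem_Iic.1 hk).eq_or_lt
  · simp
  · exact Submodule.smul_mem _ _ (zpow_mem_laurentDegLE (by omega))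

theorem iterate_derivation_mem_laurentDegLE (hDf : D f = algebraMap K R b)
    (hy : y ∈ laurentDegLE K f d) (n : ℕ) : (⇑D)^[n] y ∈ laurentDegLE K f (d - n) := by
  induction n with
  | zero => simpa using hy
  | succ n ih =>
    rw [Function.iterate_succ_apply']
    simpa [sub_add_eq_sub_sub] using derivation_mem_laurentDegLE hDf ih

theorem mul_iterate_derivation_mem_laurentDegLE (hDf : D f = algebraMap K R b) {A u : R} {j : ℕ}
    (hA : A ∈ laurentDegLE K f d) (hj : 1 ≤ j) (hd : d + 1 ≤ j) (hu : u ∈ laurentDegLE K f 0) :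
    A * (⇑D)^[j] u ∈ laurentDegLE K f (-2) := by
  obtain ⟨i, rfl⟩ := Nat.exists_eq_add_of_le' hj
  rw [Function.iterate_succ_apply]
  have h := mul_mem_laurentDegLE hA
    (iterate_derivation_mem_laurentDegLE hDf (derivation_mem_laurentDegLE_neg_two hDf hu) i)
  exact laurentDegLE_mono (by push_cast at hd; omega) h

theorem laurentDegLE_le_map_derivation [CharZero K] (hDf : D f = algebraMap K R b) (hb : b ≠ 0)
    (hd : d ≤ -2) : laurentDegLE K f d ≤ (laurentDegLE K f (d + 1)).map D.toLinearMap := by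
  refine Submodule.span_le.2 ?_
  rintro _ ⟨k, hk, rfl⟩
  have hk : k ≤ d := hk
  have hk1 : ((k + 1 : ℤ) : K) * b ≠ 0 := mul_ne_zero (Int.cast_ne_zero.2 (by omega)) hb
  refine ⟨(((k + 1 : ℤ) : K) * b)⁻¹ • ((f ^ (k + 1) : Rˣ) : R),
    Submodule.smul_mem _ _ (zpow_mem_laurentDegLE (by omega)), ?_⟩
  rw [Derivation.coeFn_coe, D.map_smul, derivation_units_zpow hDf, smul_smul, inv_mul_cancel₀ hk1,
    one_smul, add_sub_cancel_right]

theorem mem_laurentDegLE_zero_of_derivation_mem [CharZero K] (hDf : D f = algebraMap K R b)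
    (hb : b ≠ 0) (hker : ∀ y, D y = 0 → ∃ c, algebraMap K R c = y)
    (hy : D y ∈ laurentDegLE K f (-2)) : y ∈ laurentDegLE K f 0 := by
  obtain ⟨w, hw, hDw⟩ := laurentDegLE_le_map_derivation hDf hb le_rfl hy
  obtain ⟨c, hc⟩ := hker (y - w) (by simp [← hDw])
  rw [← sub_add_cancel y w, ← hc]
  exact add_mem (algebraMap_mem_laurentDegLE c le_rfl) (laurentDegLE_mono (by norm_num) hw)

end Derivation

end LaurentDegree

theorem Int.forall_of_two_step {P : ℤ → Prop} (h0 : ∀ p ≤ 0, P p)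
    (hstep : ∀ p, 1 ≤ p → P (p - 1) → P (p - 2) → P p) : ∀ p, P p := by
  suffices h : ∀ n : ℕ, ∀ p ≤ (n : ℤ), P p from fun p => h p.toNat p (Int.self_le_toNat p)
  intro n
  induction n with
  | zero => simpa using h0
  | succ n ih =>
    intro p hp
    obtain hp | rfl := (Int.le_add_one_iff.1 (by simpa using hp))
    · exact ih p hp
    · exact hstep _ (by omega) (ih _ (by omega)) (ih _ (by omega))

theorem PowerSeries.exists_C_eq_of_derivative_eq_zero {R : Type*} [CommRing R] [IsAddTorsionFree R]
    {y : R⟦X⟧} (h : d⁄dX R y = 0) : ∃ c, C c = y :=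
  ⟨constantCoeff y, derivative.ext (by simp [h]) (by simp)⟩

theorem s1_mul_sub_s2_ne_zero {K : Type*} [Field K] {lam : Fin 3 → K} {s1 s2 s3 : K}
    (hnz : ∀ j, lam j ≠ 0) (hdist : Function.Injective lam)
    (hs1 : s1 = lam 0 + lam 1 + lam 2)
    (hs2 : s2 = lam 0 * lam 1 + lam 1 * lam 2 + lam 2 * lam 0)
    (hs3 : s3 = lam 0 * lam 1 * lam 2) (hs1ne : s1 ≠ 0) (hspec : s2 ^ 2 = 3 * s1 * s3) (i : Fin 3) :
    s1 * lam i - s2 ≠ 0 := by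
  have hsq : (s1 * lam i - s2) ^ 2 =
      s1 * lam i * ((lam i - lam (i + 1)) * (lam i - lam (i + 2))) := by
    subst hs1 hs2 hs3
    fin_cases i <;> simp only [Fin.zero_eta, Fin.mk_one, Fin.reduceFinMk, Fin.reduceAdd, zero_add] <;>
      linear_combination hspec
  have hne (j : Fin 3) (hj : j ≠ 0) : lam i - lam (i + j) ≠ 0 :=
    sub_ne_zero.2 fun h => hj (by simpa using hdist h)
  rw [← pow_ne_zero_iff two_ne_zero, hsq]
  exact mul_ne_zero (mul_ne_zero hs1ne (hnz i))
    (mul_ne_zero (hne 1 (by decide)) (hne 2 (by decide)))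

section LocalP2

variable {K : Type*} [Field K] {c s1 s2 : K}

theorem constantCoeff_fP2 : constantCoeff (R := K) (fP2 K c s1 s2) = s1 * c - s2 := by
  simp [fP2, xAt]

def fP2Unit (hc : s1 * c - s2 ≠ 0) : K⟦X⟧ˣ where
  val := fP2 K c s1 s2
  inv := (fP2 K c s1 s2)⁻¹
  val_inv := PowerSeries.mul_inv_cancel _ (by rwa [constantCoeff_fP2])
  inv_val := PowerSeries.inv_mul_cancel _ (by rwa [constantCoeff_fP2])

@[simp]
theorem coe_fP2Unit (hc : s1 * c - s2 ≠ 0) : (fP2Unit hc : K⟦X⟧) = fP2 K c s1 s2 := rfl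

@[simp]
theorem coe_inv_fP2Unit (hc : s1 * c - s2 ≠ 0) :
    ((fP2Unit hc)⁻¹ : K⟦X⟧ˣ) = (fP2 K c s1 s2)⁻¹ := rfl

theorem derivative_fP2 : d⁄dX K (fP2 K c s1 s2) = algebraMap K K⟦X⟧ s1 := by
  simp [fP2, xAt]

theorem inv_C_mul_fP2_pow (hc : s1 * c - s2 ≠ 0) {a : K} (ha : a ≠ 0) (n : ℕ) :
    (C a * fP2 K c s1 s2 ^ n)⁻¹ = C a⁻¹ * ((fP2Unit hc ^ (-n : ℤ) : K⟦X⟧ˣ) : K⟦X⟧) := by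
  rw [PowerSeries.inv_eq_iff_mul_eq_one (by simp [constantCoeff_fP2, ha, hc]), zpow_neg,
    zpow_natCast, mul_mul_mul_comm, ← map_mul, inv_mul_cancel₀ ha, map_one, one_mul]
  exact (fP2Unit hc ^ n).inv_mul

variable (hc : s1 * c - s2 ≠ 0) {d : ℤ} {y : K⟦X⟧}

theorem C_mem_laurentDegLE (a : K) (h : 0 ≤ d) : C a ∈ laurentDegLE K (fP2Unit hc) d :=
  algebraMap_mem_laurentDegLE a h

theorem C_mul_mem_laurentDegLE (a : K) (hy : y ∈ laurentDegLE K (fP2Unit hc) d) :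
    C a * y ∈ laurentDegLE K (fP2Unit hc) d := by
  simpa [smul_eq_C_mul] using Submodule.smul_mem _ a hy

theorem xAt_mem_laurentDegLE (hs1 : s1 ≠ 0) (h : 1 ≤ d) :
    xAt K c ∈ laurentDegLE K (fP2Unit hc) d := by
  have hx : xAt K c = C s1⁻¹ * fP2 K c s1 s2 + C (s1⁻¹ * s2) := by
    simp only [fP2, mul_sub, ← mul_assoc, ← map_mul, inv_mul_cancel₀ hs1, map_one]
    ring
  rw [hx]
  refine add_mem (C_mul_mem_laurentDegLE hc _ ?_) (C_mem_laurentDegLE hc _ (by omega))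
  simpa using zpow_mem_laurentDegLE (f := fP2Unit hc) (k := 1) h

theorem xAt_pow_mem_laurentDegLE (hs1 : s1 ≠ 0) {k : ℕ} (h : k ≤ d) :
    xAt K c ^ k ∈ laurentDegLE K (fP2Unit hc) d :=
  laurentDegLE_mono (by simpa using h) (pow_mem_laurentDegLE (xAt_mem_laurentDegLE hc hs1 le_rfl) k)

theorem mul_inv_C_mul_fP2_pow_mem_laurentDegLE {a : K} (ha : a ≠ 0) {n : ℕ} {e : ℤ}
    (hy : y ∈ laurentDegLE K (fP2Unit hc) d) (h : d - n ≤ e) :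
    y * (C a * fP2 K c s1 s2 ^ n)⁻¹ ∈ laurentDegLE K (fP2Unit hc) e := by
  rw [inv_C_mul_fP2_pow hc ha, mul_left_comm]
  refine C_mul_mem_laurentDegLE hc _ (laurentDegLE_mono h ?_)
  simpa [sub_eq_add_neg] using mul_mem_laurentDegLE hy
    (zpow_mem_laurentDegLE (f := fP2Unit hc) (le_refl (-n : ℤ)))

variable [CharZero K]

theorem localP2_order_conditions (hs1 : s1 ≠ 0) :
    A00P2 K c s1 s2 ∈ laurentDegLE K (fP2Unit hc) (-2) ∧
    A01P2 K c s1 s2 ∈ laurentDegLE K (fP2Unit hc) 0 ∧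
    A02P2 K c s1 s2 ∈ laurentDegLE K (fP2Unit hc) 1 ∧
    A10P2 K c s1 s2 ∈ laurentDegLE K (fP2Unit hc) (-2) ∧
    A11P2 K c s1 s2 ∈ laurentDegLE K (fP2Unit hc) (-1) ∧
    A12P2 K c s1 s2 ∈ laurentDegLE K (fP2Unit hc) 1 ∧
    A13P2 K c s1 s2 ∈ laurentDegLE K (fP2Unit hc) 2 := by
  have hx (a : K) : C a * xAt K c ∈ laurentDegLE K (fP2Unit hc) 1 :=
    C_mul_mem_laurentDegLE hc a (xAt_mem_laurentDegLE hc hs1 le_rfl)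
  unfold A00P2 A01P2 A02P2 A10P2 A11P2 A12P2 A13P2 PP2
  refine ⟨mul_inv_C_mul_fP2_pow_mem_laurentDegLE hc (d := 3) (by norm_num) ?_ (by norm_num),
    mul_inv_C_mul_fP2_pow_mem_laurentDegLE hc (d := 4) (by norm_num) ?_ (by norm_num),
    mul_inv_C_mul_fP2_pow_mem_laurentDegLE hc (d := 4) (by norm_num) ?_ (by norm_num),
    mul_inv_C_mul_fP2_pow_mem_laurentDegLE hc (by norm_num)
      (mul_mem_laurentDegLE (hx _) (e := 6) ?_) (by norm_num),
    mul_inv_C_mul_fP2_pow_mem_laurentDegLE hc (by norm_num)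
      (mul_mem_laurentDegLE (hx _) (e := 6) ?_) (by norm_num),
    mul_inv_C_mul_fP2_pow_mem_laurentDegLE hc (d := 8) (by norm_num) ?_ (by norm_num),
    mul_inv_C_mul_fP2_pow_mem_laurentDegLE hc (by norm_num)
      (neg_mem (mul_mem_laurentDegLE (d := 2) ?_ (pow_mem_laurentDegLE (d := 3) ?_ 2)))
      (by norm_num)⟩
  all_goals repeat' first
    | with_reducible apply add_mem | with_reducible apply sub_mem | with_reducible apply neg_mem
    | with_reducible apply C_mul_mem_laurentDegLE hc
    | with_reducible apply C_mem_laurentDegLE hc _ (by norm_num)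
    | with_reducible apply xAt_mem_laurentDegLE hc hs1 (by norm_num)
    | with_reducible apply xAt_pow_mem_laurentDegLE hc hs1 (by norm_num)

theorem localP2_rhs_mem_laurentDegLE (hs1 : s1 ≠ 0) {u v : K⟦X⟧}
    (hu : u ∈ laurentDegLE K (fP2Unit hc) 0) (hv : v ∈ laurentDegLE K (fP2Unit hc) 0) :
    A00P2 K c s1 s2 * u + A01P2 K c s1 s2 * d⁄dX K u + A02P2 K c s1 s2 * (⇑(d⁄dX K))^[2] u +
      A10P2 K c s1 s2 * v + A11P2 K c s1 s2 * d⁄dX K v + A12P2 K c s1 s2 * (⇑(d⁄dX K))^[2] v +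
      A13P2 K c s1 s2 * (⇑(d⁄dX K))^[3] v ∈ laurentDegLE K (fP2Unit hc) (-2) := by
  obtain ⟨h00, h01, h02, h10, h11, h12, h13⟩ := localP2_order_conditions hc hs1
  have hDf : d⁄dX K (fP2Unit hc) = algebraMap K K⟦X⟧ s1 := derivative_fP2
  refine add_mem (add_mem (add_mem (add_mem (add_mem (add_mem ?_ ?_) ?_) ?_) ?_) ?_) ?_
  · simpa using mul_mem_laurentDegLE h00 hu
  · exact mul_iterate_derivation_mem_laurentDegLE hDf (j := 1) h01 le_rfl le_rfl hu
  · exact mul_iterate_derivation_mem_laurentDegLE hDf h02 (by norm_num) le_rfl hu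
  · simpa using mul_mem_laurentDegLE h10 hv
  · exact mul_iterate_derivation_mem_laurentDegLE hDf (j := 1) h11 le_rfl (by norm_num) hv
  · exact mul_iterate_derivation_mem_laurentDegLE hDf h12 (by norm_num) le_rfl hv
  · exact mul_iterate_derivation_mem_laurentDegLE hDf h13 (by norm_num) le_rfl hv

end LocalP2

/-- **Admissibility of the local `ℙ²` differential system under the specialization
`s₂² = 3s₁s₃`.**  Let `K` be a field of characteristic zero, `λ₀, λ₁, λ₂ ∈ K` pairwise
distinct and nonzero with `s₁ ≠ 0` and `s₂² = 3s₁s₃`.  Since `s₁λᵢ - s₂ ≠ 0`, the ring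
`K[x][(s₁x - s₂)⁻¹]` embeds into `K[[x - λᵢ]]`, modelled as `K[[X]]` with `x = λᵢ + X`.
Then for any sequence `(Φ_p)_{p ∈ ℤ}` with `Φ₀ = 1`, `Φ_j = 0` for `j < 0`, satisfying
for all `p ≥ 1` the recursion
`dΦ_p/dx = A₀₀Φ_{p-1} + A₀₁Φ'_{p-1} + A₀₂Φ''_{p-1} + A₁₀Φ_{p-2} + A₁₁Φ'_{p-2}
 + A₁₂Φ''_{p-2} + A₁₃Φ'''_{p-2}`,
every `Φ_p` lies in the subring `K[x][(s₁x - s₂)⁻¹]` of `K[[x - λᵢ]]`. -/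
theorem admissible_system_localP2
    (K : Type*) [Field K] [CharZero K]
    (lam : Fin 3 → K) (hnz : ∀ j, lam j ≠ 0) (hdist : Function.Injective lam) (i : Fin 3)
    (s1 s2 s3 : K)
    (hs1 : s1 = lam 0 + lam 1 + lam 2)
    (hs2 : s2 = lam 0 * lam 1 + lam 1 * lam 2 + lam 2 * lam 0)
    (hs3 : s3 = lam 0 * lam 1 * lam 2)
    (hs1ne : s1 ≠ 0) (hspec : s2 ^ 2 = 3 * s1 * s3)
    (Φ : ℤ → K⟦X⟧) (hΦ0 : Φ 0 = 1) (hΦneg : ∀ j : ℤ, j < 0 → Φ j = 0)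
    (hrec : ∀ p : ℤ, 1 ≤ p →
      PowerSeries.derivative K (Φ p) =
        A00P2 K (lam i) s1 s2 * Φ (p - 1) +
        A01P2 K (lam i) s1 s2 * PowerSeries.derivative K (Φ (p - 1)) +
        A02P2 K (lam i) s1 s2 *
          (⇑(PowerSeries.derivative K))^[2] (Φ (p - 1)) +
        A10P2 K (lam i) s1 s2 * Φ (p - 2) +
        A11P2 K (lam i) s1 s2 * PowerSeries.derivative K (Φ (p - 2)) +
        A12P2 K (lam i) s1 s2 *
          (⇑(PowerSeries.derivative K))^[2] (Φ (p - 2)) +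
        A13P2 K (lam i) s1 s2 *
          (⇑(PowerSeries.derivative K))^[3] (Φ (p - 2))) :
    ∀ p : ℤ, Φ p ∈
      Algebra.adjoin K {xAt K (lam i), (fP2 K (lam i) s1 s2)⁻¹} := by
  have hc := s1_mul_sub_s2_ne_zero hnz hdist hs1 hs2 hs3 hs1ne hspec i
  have hDf : d⁄dX K (fP2Unit hc) = algebraMap K K⟦X⟧ s1 := derivative_fP2
  have hΦ : ∀ p, Φ p ∈ laurentDegLE K (fP2Unit hc) 0 := by
    refine Int.forall_of_two_step (fun p hp => ?_) (fun p hp h1 h2 => ?_)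
    · obtain rfl | hp := hp.eq_or_lt
      · simpa [hΦ0] using algebraMap_mem_laurentDegLE (f := fP2Unit hc) (1 : K) le_rfl
      · simp [hΦneg p hp]
    refine mem_laurentDegLE_zero_of_derivation_mem hDf hs1ne
      (fun y hy => PowerSeries.exists_C_eq_of_derivative_eq_zero hy) ?_
    rw [hrec p hp]
    exact localP2_rhs_mem_laurentDegLE hc hs1ne h1 h2
  intro p
  have h := laurentDegLE_zero_le_adjoin_inv (hΦ p)
  rw [Subalgebra.mem_toSubmodule, coe_inv_fP2Unit] at h
  exact Algebra.adjoin_mono (Set.subset_insert _ _) h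

end
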